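/- Let G be a tree-like graph with all degrees at most 2^{ℵ₀}. Then G has exactly 2^{|V(G)|} pairwise inequivalent asymmetrizing sets; in particular G is asymmetrizable. -/

import Mathlib

open SimpleGraph

universe u

variable {V : Type u}

/-- `S` is an asymmetrizing set of `G`: the only automorphism of `G`
preserving `S` setwise is the identity. -/
def IsAsymmetrizing (G : SimpleGraph V) (S : Set V) : Prop :=
  ∀ φ : G ≃g G, (∀ v, φ v ∈ S ↔ v ∈ S) → ∀ v, φ v = v

/-- The number of pairwise inequivalent asymmetrizing sets of `G`,
where two asymmetrizing sets are equivalent if some automorphism maps one onto the other. -/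
noncomputable def asymNumber (G : SimpleGraph V) : Cardinal.{u} :=
  Cardinal.mk (Quot (fun S S' : {S : Set V // IsAsymmetrizing G S} =>
    ∃ φ : G ≃g G, (fun v => φ v) '' S.1 = S'.1))

/-- Every non-identity automorphism of `G` moves at least `m` vertices.
(This encodes "motion ≥ m", with the convention that asymmetric graphs
have motion exceeding every cardinal.) -/
def MotionAtLeast (G : SimpleGraph V) (m : Cardinal.{u}) : Prop :=
  ∀ φ : G ≃g G, (∃ v, φ v ≠ v) → m ≤ Cardinal.mk {v | φ v ≠ v}

/-- `G` has motion exactly `m`: every non-identity automorphism moves at least `m`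
vertices and some non-identity automorphism moves exactly `m` vertices. -/
def HasMotion (G : SimpleGraph V) (m : Cardinal.{u}) : Prop :=
  MotionAtLeast G m ∧
    ∃ φ : G ≃g G, (∃ v, φ v ≠ v) ∧ Cardinal.mk {v | φ v ≠ v} = m

/-- A graph is rayless if it contains no one-sided infinite path. -/
def Rayless (G : SimpleGraph V) : Prop :=
  ∀ f : ℕ → V, ¬ (Function.Injective f ∧ ∀ n, G.Adj (f n) (f (n + 1)))

/-- `f : ℤ → V` is a double ray (two-sided infinite path) in `G`. -/
def IsDoubleRayIn (G : SimpleGraph V) (f : ℤ → V) : Prop :=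
  Function.Injective f ∧ ∀ n, G.Adj (f n) (f (n + 1))

/-- In the tree `G` rooted at `w`, the set of descendants of `x` (including `x`):
those `v` such that `x` lies on every walk (in particular the unique path) from `w` to `v`. -/
def Desc (G : SimpleGraph V) (w x : V) : Set V :=
  {v | ∀ p : G.Walk w v, x ∈ p.support}

/-- In the tree `G` rooted at `w`, `x` is a child of `y`. -/
def IsChild (G : SimpleGraph V) (w y x : V) : Prop :=
  G.Adj y x ∧ x ∈ Desc G w y

/-- An automorphism of the induced subgraph on `D` fixes the vertex `x`. -/
def RootedFixes (G : SimpleGraph V) (D : Set V) (x : V)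
    (φ : G.induce D ≃g G.induce D) : Prop :=
  ∀ v : D, (v : V) = x → ((φ v : V) = x)

/-- `S` is an asymmetrizing set of the rooted graph `(G.induce D, x)`: the only
automorphism of `G.induce D` fixing `x` and preserving `S` setwise is the identity. -/
def RootedAsymmetrizing (G : SimpleGraph V) (D : Set V) (x : V) (S : Set V) : Prop :=
  ∀ φ : G.induce D ≃g G.induce D, RootedFixes G D x φ →
    (∀ v : D, ((φ v : V) ∈ S ↔ (v : V) ∈ S)) → ∀ v, φ v = v

/-- The number of inequivalent asymmetrizing sets of the rooted graph `(G.induce D, x)`,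
where equivalence is via automorphisms of `G.induce D` fixing the root `x`. -/
noncomputable def aRooted (G : SimpleGraph V) (D : Set V) (x : V) : Cardinal.{u} :=
  Cardinal.mk (Quot (fun S S' : {S : Set V // S ⊆ D ∧ RootedAsymmetrizing G D x S} =>
    ∃ φ : G.induce D ≃g G.induce D, RootedFixes G D x φ ∧
      (fun v : D => ((φ v : V))) '' {v : D | (v : V) ∈ S.1} = S'.1))

/-- The set of vertices of `G` lying on some double ray. -/
def Tstar (G : SimpleGraph V) : Set V :=
  {v | ∃ f : ℤ → V, IsDoubleRayIn G f ∧ ∃ n, f n = v}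

/-- The edges of `G` joining two vertices lying on double rays. -/
def TstarEdges (G : SimpleGraph V) : Set (Sym2 V) :=
  {e | ∃ a b, e = s(a, b) ∧ G.Adj a b ∧ a ∈ Tstar G ∧ b ∈ Tstar G}

/-- `y` lies on all shortest paths from `x` to `w` in `G`. -/
def OnAllShortest (G : SimpleGraph V) (w y x : V) : Prop :=
  ∀ p : G.Walk x w, p.length = G.dist x w → y ∈ p.support

/-!
Choose for every vertex `v` a child `c v` whose only parent is `v`. Every vertex lies on exactly
one chain `h, c h, c (c h), …` starting at a vertex `h ∉ range c`. On each chain, mark position `0`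
iff `h = w`, leave position `1` unmarked, and from position `2` on write a bit sequence in blocks
`1 1 b`. Then `w` is the only marked vertex without a marked neighbour, and among the children of
`v` only `c v` is marked or has a marked child. Hence an automorphism preserving the marking fixes
`w`, commutes with `c`, and maps each chain onto a chain carrying the same bits. The degree bound
gives `|V| ≤ 2^ℵ₀`, so the bits on the chain of `h` can interleave an injective name of `h` with
the indicator of an arbitrary `A ⊆ V` along the chain; the resulting markings are asymmetrizing
and pairwise inequivalent.
-/

open scoped Cardinal

namespace Function

variable {α : Type*} {f : α → α}

theorem exists_notMem_range_iterate_eq (r : α → ℕ) (hr : ∀ a, r a < r (f a)) (a : α) :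
    ∃ b ∉ Set.range f, ∃ k, f^[k] b = a := by
  induction hn : r a using Nat.strong_induction_on generalizing a with
  | _ n ih =>
    by_cases ha : a ∈ Set.range f
    · obtain ⟨a', rfl⟩ := ha
      obtain ⟨b, hb, k, rfl⟩ := ih (r a') (hn ▸ hr a') a' rfl
      exact ⟨b, hb, k + 1, iterate_succ_apply' f k b⟩
    · exact ⟨a, ha, 0, rfl⟩

theorem Injective.iterate_eq_iterate_of_notMem_range (hf : Injective f) {a b : α}
    (ha : a ∉ Set.range f) (hb : b ∉ Set.range f) {k l : ℕ} (h : f^[k] a = f^[l] b) :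
    a = b ∧ k = l := by
  induction k generalizing l with
  | zero =>
    cases l with
    | zero => exact ⟨h, rfl⟩
    | succ l => exact absurd ⟨_, (h.trans (iterate_succ_apply' f l b)).symm⟩ ha
  | succ k ih =>
    cases l with
    | zero => exact absurd ⟨_, (iterate_succ_apply' f k a).symm.trans h⟩ hb
    | succ l =>
      rw [iterate_succ_apply', iterate_succ_apply'] at h
      obtain ⟨rfl, rfl⟩ := ih (hf h)
      exact ⟨rfl, rfl⟩

theorem Commute.apply_notMem_range {c : α → α} (hcomm : Function.Commute f c) (hf : Bijective f)
    {a : α} (ha : a ∉ Set.range c) : f a ∉ Set.range c := by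
  rintro ⟨u, hu⟩
  obtain ⟨u, rfl⟩ := hf.2 u
  exact ha ⟨u, hf.1 (by rw [hcomm u, hu])⟩

end Function

theorem Cardinal.exists_injective_nat_bool {α : Type u} (h : #α ≤ 2 ^ ℵ₀) :
    ∃ f : α → ℕ → Bool, Function.Injective f := by
  have : Cardinal.lift.{0} #α ≤ Cardinal.lift.{u} #(ℕ → Bool) := by simpa using h
  obtain ⟨f⟩ := Cardinal.lift_mk_le'.mp this
  exact ⟨f, f.injective⟩

namespace SimpleGraph

variable {G : SimpleGraph V} {w : V}

theorem Connected.dist_le_dist_add_one (hc : G.Connected) {a b : V} (hab : G.Adj a b) (w : V) :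
    G.dist a w ≤ G.dist b w + 1 := by
  have := hc.dist_triangle (u := a) (v := b) (w := w)
  rw [dist_eq_one_iff_adj.mpr hab] at this
  omega

theorem Connected.exists_adj_dist_add_one_eq (hc : G.Connected) {v : V} (hv : v ≠ w) :
    ∃ p, G.Adj p v ∧ G.dist p w + 1 = G.dist v w := by
  obtain ⟨q, hq⟩ := hc.exists_walk_length_eq_dist v w
  cases q with
  | nil => exact absurd rfl hv
  | cons hadj q =>
    refine ⟨_, hadj.symm, le_antisymm ?_ (hc.dist_le_dist_add_one hadj w)⟩
    have := dist_le q
    rw [Walk.length_cons] at hq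
    omega

theorem Connected.mk_le_of_degree_le {κ : Cardinal.{u}} (hκ : ℵ₀ ≤ κ) (hc : G.Connected)
    (hdeg : ∀ v, #(G.neighborSet v) ≤ κ) : #V ≤ κ := by
  obtain ⟨w⟩ := hc.nonempty
  have hball : ∀ n, #{v | G.dist v w ≤ n} ≤ κ := by
    intro n
    induction n with
    | zero =>
      have hsub : {v | G.dist v w ≤ 0} ⊆ {w} := fun v hv =>
        hc.dist_eq_zero_iff.mp (Nat.le_zero.mp hv)
      calc #{v | G.dist v w ≤ 0} ≤ #({w} : Set V) := Cardinal.mk_le_mk_of_subset hsub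
        _ ≤ κ := by simpa using Cardinal.one_le_aleph0.trans hκ
    | succ n ih =>
      -- every vertex other than `w` is a neighbour of a vertex one step closer to `w`
      have hsub : {v | G.dist v w ≤ n + 1} ⊆
          insert w (⋃ p ∈ {v | G.dist v w ≤ n}, G.neighborSet p) := by
        intro v hv
        by_cases hvw : v = w
        · exact Or.inl hvw
        obtain ⟨p, hp, hpv⟩ := hc.exists_adj_dist_add_one_eq hvw
        have hvn : G.dist v w ≤ n + 1 := hv
        exact Or.inr (Set.mem_biUnion (show G.dist p w ≤ n by omega) hp)
      calc #{v | G.dist v w ≤ n + 1}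
          ≤ #(⋃ p ∈ {v | G.dist v w ≤ n}, G.neighborSet p) + 1 :=
            (Cardinal.mk_le_mk_of_subset hsub).trans Cardinal.mk_insert_le
        _ ≤ κ * κ + 1 := by
            gcongr
            exact (Cardinal.mk_biUnion_le _ _).trans
              (mul_le_mul' ih (ciSup_le' fun p => hdeg p))
        _ = κ := by rw [Cardinal.mul_eq_self hκ, Cardinal.add_one_eq hκ]
  exact Cardinal.mk_le_of_countable_eventually_mem (l := Filter.atTop)
    (fun v => Filter.eventually_ge_atTop (G.dist v w)) hball

theorem Reachable.dist_map_le {V' : Type*} {G' : SimpleGraph V'} (f : G →g G') {a b : V}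
    (h : G.Reachable a b) : G'.dist (f a) (f b) ≤ G.dist a b := by
  obtain ⟨p, hp⟩ := h.exists_walk_length_eq_dist
  simpa [hp] using dist_le (p.map f)

theorem Iso.dist_eq {V' : Type*} {G' : SimpleGraph V'} (φ : G ≃g G') (a b : V) :
    G'.dist (φ a) (φ b) = G.dist a b := by
  by_cases h : G.Reachable a b
  · refine le_antisymm (h.dist_map_le φ.toHom) ?_
    simpa using (h.map φ.toHom).dist_map_le φ.symm.toHom
  · rw [dist_eq_zero_of_not_reachable h,
      dist_eq_zero_of_not_reachable (Iso.reachable_iff.not.mpr h)]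

theorem Walk.length_takeUntil_add_dist_le [DecidableEq V] {a b y : V} (p : G.Walk a b)
    (hy : y ∈ p.support) : (p.takeUntil y hy).length + G.dist y b ≤ p.length := by
  conv_rhs => rw [← p.take_spec hy, Walk.length_append]
  exact Nat.add_le_add_left (dist_le _) _

section TreeLike

variable {x y : V}

theorem Connected.dist_eq_add_one_of_onAllShortest (hc : G.Connected) (hadj : G.Adj y x)
    (hy : OnAllShortest G w y x) : G.dist x w = G.dist y w + 1 := by
  classical
  obtain ⟨p, hp⟩ := hc.exists_walk_length_eq_dist x w
  have hlen := p.length_takeUntil_add_dist_le (hy p hp)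
  have hpos : (p.takeUntil y (hy p hp)).length ≠ 0 := fun h0 =>
    hadj.ne (Walk.eq_of_length_eq_zero h0).symm
  have := hc.dist_le_dist_add_one hadj.symm w
  omega

theorem Connected.eq_of_onAllShortest (hc : G.Connected) (hadj : G.Adj y x)
    (hy : OnAllShortest G w y x) {z : V} (hz : G.Adj z x) (hdz : G.dist z w + 1 = G.dist x w) :
    z = y := by
  classical
  have hdx := hc.dist_eq_add_one_of_onAllShortest hadj hy
  obtain ⟨q, hq⟩ := hc.exists_walk_length_eq_dist z w
  -- prefixing `x` to a shortest `z`–`w` walk gives a shortest `x`–`w` walk, which must visit `y`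
  have hyq : y ∈ (Walk.cons hz.symm q).support := hy _ (by rw [Walk.length_cons]; omega)
  rw [Walk.support_cons, List.mem_cons] at hyq
  obtain hyx | hyq := hyq
  · exact absurd hyx hadj.ne
  · have hlen := q.length_takeUntil_add_dist_le hyq
    exact Walk.eq_of_length_eq_zero (p := q.takeUntil y hyq) (by omega)

end TreeLike

structure IsSolitaryChildMap (G : SimpleGraph V) (w : V) (c : V → V) : Prop where
  adj : ∀ v, G.Adj v (c v)
  dist_eq : ∀ v, G.dist (c v) w = G.dist v w + 1
  eq_of_adj : ∀ v u, G.Adj u (c v) → G.dist u w + 1 = G.dist (c v) w → u = v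

theorem Connected.exists_isSolitaryChildMap (hc : G.Connected)
    (htl : ∀ y, ∃ x, G.Adj y x ∧ OnAllShortest G w y x) : ∃ c, IsSolitaryChildMap G w c := by
  choose c hadj hon using htl
  exact ⟨c, hadj, fun y => hc.dist_eq_add_one_of_onAllShortest (hadj y) (hon y),
    fun y _ hz hdz => hc.eq_of_onAllShortest (hadj y) (hon y) hz hdz⟩

end SimpleGraph

def codeTape (root : Prop) (d : ℕ → Bool) : ℕ → Prop
  | 0 => root
  | 1 => False
  | k + 2 => k % 3 = 2 → d (k / 3) = true

section codeTape

variable {r : Prop} {d : ℕ → Bool}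

theorem codeTape_add_one_or_add_two (k : ℕ) : codeTape r d (k + 1) ∨ codeTape r d (k + 2) := by
  rcases k with _ | k
  · exact Or.inr fun h => absurd h (by decide)
  · by_cases hk : k % 3 = 2
    · exact Or.inr fun h => absurd h (by omega)
    · exact Or.inl fun h => absurd h hk

theorem codeTape_add_one_or_add_three (k : ℕ) : codeTape r d (k + 1) ∨ codeTape r d (k + 3) := by
  rcases k with _ | k
  · exact Or.inr fun h => absurd h (by decide)
  · by_cases hk : k % 3 = 2
    · exact Or.inr fun h => absurd h (by omega)
    · exact Or.inl fun h => absurd h hk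

theorem codeTape_three_mul_add_four (j : ℕ) : codeTape r d (3 * j + 4) ↔ d j = true := by
  change (3 * j + 2) % 3 = 2 → d ((3 * j + 2) / 3) = true ↔ _
  rw [show (3 * j + 2) / 3 = j by omega]
  exact ⟨fun h => h (by omega), fun h _ => h⟩

theorem eq_of_forall_codeTape_iff {r' : Prop} {d' : ℕ → Bool}
    (h : ∀ k, codeTape r d k ↔ codeTape r' d' k) : d = d' := by
  funext j
  have := h (3 * j + 4)
  rwa [codeTape_three_mul_add_four, codeTape_three_mul_add_four, Bool.coe_iff_coe] at this

end codeTape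

open Classical in
noncomputable def chainData (name : V → ℕ → Bool) (c : V → V) (A : Set V) (h : V) (n : ℕ) :
    Bool :=
  if n % 2 = 0 then name h (n / 2) else decide (c^[n / 2] h ∈ A)

theorem chainData_two_mul (name : V → ℕ → Bool) (c : V → V) (A : Set V) (h : V) (n : ℕ) :
    chainData name c A h (2 * n) = name h n := by
  simp [chainData]

theorem chainData_two_mul_add_one (name : V → ℕ → Bool) (c : V → V) (A : Set V) (h : V)
    (n : ℕ) : chainData name c A h (2 * n + 1) = true ↔ c^[n] h ∈ A := by
  simp [chainData, Nat.add_mod, show (2 * n + 1) / 2 = n by omega]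

def chainCode (c : V → V) (w : V) (d : V → ℕ → Bool) : Set V :=
  {v | ∃ h ∉ Set.range c, ∃ k, c^[k] h = v ∧ codeTape (h = w) (d h) k}

theorem Function.Injective.iterate_mem_chainCode_iff {c : V → V} (hc : Function.Injective c)
    {w h : V} {d : V → ℕ → Bool} (hh : h ∉ Set.range c) (k : ℕ) :
    c^[k] h ∈ chainCode c w d ↔ codeTape (h = w) (d h) k := by
  refine ⟨?_, fun hk => ⟨h, hh, k, rfl, hk⟩⟩
  rintro ⟨h', hh', k', hk', hcode⟩
  obtain ⟨rfl, rfl⟩ := hc.iterate_eq_iterate_of_notMem_range hh' hh hk'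
  exact hcode

def SelfOrChildMem (G : SimpleGraph V) (w : V) (S : Set V) (z : V) : Prop :=
  z ∈ S ∨ ∃ u, G.Adj z u ∧ G.dist u w = G.dist z w + 1 ∧ u ∈ S

theorem SelfOrChildMem.map {G : SimpleGraph V} {w : V} {S T : Set V} {z : V} (φ : G ≃g G)
    (hdist : ∀ v, G.dist (φ v) w = G.dist v w) (hST : ∀ v ∈ S, φ v ∈ T) :
    SelfOrChildMem G w S z → SelfOrChildMem G w T (φ z)
  | .inl hz => .inl (hST z hz)
  | .inr ⟨u, hzu, hdu, hu⟩ =>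
    .inr ⟨φ u, φ.map_adj_iff.mpr hzu, by rw [hdist, hdist, hdu], hST u hu⟩

namespace SimpleGraph.IsSolitaryChildMap

variable {G : SimpleGraph V} {w : V} {c : V → V}

theorem injective (hN : IsSolitaryChildMap G w c) : Function.Injective c := fun a b hab =>
  hN.eq_of_adj b a (hab ▸ hN.adj a) (by rw [← hab, hN.dist_eq])

theorem dist_iterate (hN : IsSolitaryChildMap G w c) (k : ℕ) (v : V) :
    G.dist (c^[k] v) w = G.dist v w + k := by
  induction k with
  | zero => rfl
  | succ k ih => rw [Function.iterate_succ_apply', hN.dist_eq, ih, add_assoc]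

theorem root_notMem_range (hN : IsSolitaryChildMap G w c) : w ∉ Set.range c := by
  rintro ⟨v, hv⟩
  simpa [hv] using hN.dist_eq v

theorem exists_iterate_eq (hN : IsSolitaryChildMap G w c) (v : V) :
    ∃ h ∉ Set.range c, ∃ k, c^[k] h = v :=
  Function.exists_notMem_range_iterate_eq (G.dist · w) (fun v => by simp [hN.dist_eq]) v

theorem eq_or_notMem_range_of_adj (hN : IsSolitaryChildMap G w c) {v z : V} (hadj : G.Adj v z)
    (hd : G.dist z w = G.dist v w + 1) : z = c v ∨ z ∉ Set.range c := by
  by_cases hz : z ∈ Set.range c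
  · obtain ⟨u, rfl⟩ := hz
    exact Or.inl (congrArg c (hN.eq_of_adj u v hadj (by omega)).symm)
  · exact Or.inr hz

variable {d : V → ℕ → Bool}

theorem root_mem_chainCode (hN : IsSolitaryChildMap G w c) : w ∈ chainCode c w d :=
  ⟨w, hN.root_notMem_range, 0, rfl, rfl⟩

theorem notMem_chainCode_of_adj_root (hN : IsSolitaryChildMap G w c) {u : V} (hu : G.Adj w u) :
    u ∉ chainCode c w d := by
  rintro ⟨h, hh, k, rfl, hk⟩
  have hd := hN.dist_iterate k h
  rw [dist_comm, dist_eq_one_iff_adj.mpr hu] at hd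
  rcases k with _ | _ | k
  · exact hu.ne hk.symm
  · exact hk
  · omega

theorem exists_adj_mem_chainCode (hN : IsSolitaryChildMap G w c) {v : V}
    (hv : v ∈ chainCode c w d) (hvw : v ≠ w) : ∃ u, G.Adj v u ∧ u ∈ chainCode c w d := by
  obtain ⟨h, hh, k, rfl, hk⟩ := hv
  rcases k with _ | _ | k
  · exact absurd hk hvw
  · exact hk.elim
  · have hcode := hN.injective.iterate_mem_chainCode_iff (w := w) (d := d) hh
    rcases codeTape_add_one_or_add_three (r := h = w) (d := d h) k with hk' | hk'
    · refine ⟨c^[k + 1] h, ?_, (hcode _).mpr hk'⟩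
      rw [Function.iterate_succ_apply' c (k + 1)]
      exact (hN.adj _).symm
    · refine ⟨c^[k + 3] h, ?_, (hcode _).mpr hk'⟩
      rw [Function.iterate_succ_apply' c (k + 2)]
      exact hN.adj _

theorem selfOrChildMem_chainCode_iff (hN : IsSolitaryChildMap G w c) {v z : V}
    (hadj : G.Adj v z) (hd : G.dist z w = G.dist v w + 1) :
    SelfOrChildMem G w (chainCode c w d) z ↔ z = c v := by
  refine ⟨fun hz => ?_, ?_⟩
  · refine (hN.eq_or_notMem_range_of_adj hadj hd).resolve_right fun hhead => ?_
    have hcode := hN.injective.iterate_mem_chainCode_iff (w := w) (d := d) hhead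
    rcases hz with hz | ⟨u, hzu, hdu, hu⟩
    · have hzw : z = w := (hcode 0).mp hz
      simp [hzw] at hd
    · rcases hN.eq_or_notMem_range_of_adj hzu hdu with rfl | huhead
      · exact (hcode 1).mp hu
      · have huw : u = w := (hN.injective.iterate_mem_chainCode_iff huhead 0).mp hu
        simp [huw] at hdu
  · rintro rfl
    obtain ⟨h, hh, k, rfl⟩ := hN.exists_iterate_eq v
    have hcode := hN.injective.iterate_mem_chainCode_iff (w := w) (d := d) hh
    rw [← Function.iterate_succ_apply' c k h]
    rcases codeTape_add_one_or_add_two (r := h = w) (d := d h) k with hk | hk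
    · exact Or.inl ((hcode _).mpr hk)
    · refine Or.inr ⟨c^[k + 2] h, ?_, ?_, (hcode _).mpr hk⟩
      · rw [Function.iterate_succ_apply' c (k + 1)]
        exact hN.adj _
      · rw [hN.dist_iterate, hN.dist_iterate]
        omega

section Automorphism

variable {d' : V → ℕ → Bool} {φ : G ≃g G}

theorem map_root_of_chainCode (hN : IsSolitaryChildMap G w c)
    (hφ : ∀ v, φ v ∈ chainCode c w d' ↔ v ∈ chainCode c w d) : φ w = w := by
  -- `w` is the only marked vertex without a marked neighbour
  by_contra hne
  obtain ⟨u, hwu, hu⟩ := hN.exists_adj_mem_chainCode ((hφ w).mpr hN.root_mem_chainCode) hne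
  refine hN.notMem_chainCode_of_adj_root (d := d) (u := φ.symm u) ?_ ?_
  · rwa [← φ.map_adj_iff, φ.apply_symm_apply]
  · rwa [← hφ, φ.apply_symm_apply]

theorem commute_of_chainCode (hN : IsSolitaryChildMap G w c)
    (hφ : ∀ v, φ v ∈ chainCode c w d' ↔ v ∈ chainCode c w d) : Function.Commute φ c := by
  intro v
  have hdist : ∀ v, G.dist (φ v) w = G.dist v w := fun v => by
    conv_lhs => rw [← hN.map_root_of_chainCode hφ]
    exact φ.dist_eq v w
  -- among the children of `φ v`, only `c (φ v)` is marked or has a marked child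
  refine (hN.selfOrChildMem_chainCode_iff (d := d') (φ.map_adj_iff.mpr (hN.adj v))
    (by rw [hdist, hdist, hN.dist_eq])).mp ?_
  exact SelfOrChildMem.map φ hdist (fun u hu => (hφ u).mpr hu)
    ((hN.selfOrChildMem_chainCode_iff (hN.adj v) (hN.dist_eq v)).mpr rfl)

theorem data_eq_of_chainCode (hN : IsSolitaryChildMap G w c)
    (hφ : ∀ v, φ v ∈ chainCode c w d' ↔ v ∈ chainCode c w d) {h : V} (hh : h ∉ Set.range c) :
    d' (φ h) = d h := by
  have hcomm := hN.commute_of_chainCode hφ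
  refine eq_of_forall_codeTape_iff (r := φ h = w) (r' := h = w) fun k => ?_
  rw [← hN.injective.iterate_mem_chainCode_iff (hcomm.apply_notMem_range φ.bijective hh),
    ← hN.injective.iterate_mem_chainCode_iff hh, ← (hcomm.iterate_right k).eq, hφ]

end Automorphism

theorem eq_of_chainCode_chainData (hN : IsSolitaryChildMap G w c) {name : V → ℕ → Bool}
    (hname : Function.Injective name) {A B : Set V} {φ : G ≃g G}
    (hφ : ∀ v, φ v ∈ chainCode c w (chainData name c B) ↔
      v ∈ chainCode c w (chainData name c A)) :
    (∀ v, φ v = v) ∧ A = B := by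
  have hdata := fun h (hh : h ∉ Set.range c) => hN.data_eq_of_chainCode hφ hh
  have hfix : ∀ h ∉ Set.range c, φ h = h := fun h hh => hname <| funext fun n => by
    simpa only [chainData_two_mul] using congrFun (hdata h hh) (2 * n)
  refine ⟨fun v => ?_, Set.ext fun v => ?_⟩
  all_goals obtain ⟨h, hh, k, rfl⟩ := hN.exists_iterate_eq v
  · rw [((hN.commute_of_chainCode hφ).iterate_right k).eq, hfix h hh]
  · have := congrFun (hdata h hh) (2 * k + 1)
    rw [hfix h hh] at this
    rw [← chainData_two_mul_add_one name c A, ← chainData_two_mul_add_one name c B, this]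

end SimpleGraph.IsSolitaryChildMap

theorem equivalence_exists_image_eq {G : SimpleGraph V} (p : Set V → Prop) :
    Equivalence fun S T : {S : Set V // p S} => ∃ φ : G ≃g G, (fun v => φ v) '' S.1 = T.1 where
  refl _ := ⟨SimpleGraph.Iso.refl, Set.image_id' _⟩
  symm := fun ⟨φ, hφ⟩ => ⟨φ.symm, by rw [← hφ, Set.image_image]; simp⟩
  trans := fun ⟨φ, hφ⟩ ⟨ψ, hψ⟩ => ⟨φ.trans ψ, by rw [← hψ, ← hφ, Set.image_image]; rfl⟩

theorem asymNumber_le_two_pow (G : SimpleGraph V) : asymNumber G ≤ 2 ^ #V :=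
  Cardinal.mk_quot_le.trans ((Cardinal.mk_subtype_le _).trans Cardinal.mk_set.le)

theorem two_pow_le_asymNumber {G : SimpleGraph V} (f : Set V → Set V)
    (hf : ∀ A, IsAsymmetrizing G (f A))
    (hinj : ∀ A B (φ : G ≃g G), (∀ v, φ v ∈ f B ↔ v ∈ f A) → A = B) :
    2 ^ #V ≤ asymNumber G := by
  rw [← Cardinal.mk_set]
  refine Cardinal.mk_le_of_injective (f := fun A => Quot.mk _ ⟨f A, hf A⟩) fun A B hAB => ?_
  obtain ⟨φ, hφ⟩ := (equivalence_exists_image_eq _).eqvGen_iff.mp (Quot.eq.mp hAB)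
  have hφ : (fun v => φ v) '' f A = f B := hφ
  exact hinj A B φ fun v => by rw [← hφ, φ.injective.mem_set_image]

/-- A tree-like graph with degrees at most `2^ℵ₀` has exactly
`2^{|V(G)|}` inequivalent asymmetrizing sets; in particular it is asymmetrizable. -/
theorem tree_like_asym (G : SimpleGraph V) (hc : G.Connected) (w : V)
    (htl : ∀ y, ∃ x, G.Adj y x ∧ OnAllShortest G w y x)
    (hdeg : ∀ v, Cardinal.mk (G.neighborSet v) ≤ 2 ^ Cardinal.aleph0) :
    asymNumber G = 2 ^ Cardinal.mk V ∧ ∃ S : Set V, IsAsymmetrizing G S := by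
  obtain ⟨c, hN⟩ := hc.exists_isSolitaryChildMap htl
  obtain ⟨name, hname⟩ :=
    Cardinal.exists_injective_nat_bool (hc.mk_le_of_degree_le (Cardinal.cantor _).le hdeg)
  have hasym : ∀ A, IsAsymmetrizing G (chainCode c w (chainData name c A)) := fun _ _ hφ =>
    (hN.eq_of_chainCode_chainData hname hφ).1
  refine ⟨le_antisymm (asymNumber_le_two_pow G) ?_, _, hasym ∅⟩
  exact two_pow_le_asymNumber _ hasym fun _ _ _ hφ => (hN.eq_of_chainCode_chainData hname hφ).2
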